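/- arXiv:2111.02250 — 3 statements merged into one kernel-verified Lean document; each statement's English description precedes it below -/
import Mathlib

section
/- Let {λ_k} be a nondecreasing sequence of nonnegative real numbers such that √λ_{k+M} − √λ_k ≥ γ for all k, where M ∈ ℕ* and γ > 0. Then for all k ∈ ℕ* and all ρ > 0, the counting function N_k(ρ) := card{m : 0 < |λ_m − λ_k| ≤ ρ} satisfies N_k(ρ) ≤ 2(√ρ/γ + 1)M. -/
theorem stmt_1 (lam : ℕ → ℝ) (M : ℕ) (γ : ℝ) (hM : 1 ≤ M) (hγ : 0 < γ)
    (hnonneg : ∀ k, 1 ≤ k → 0 ≤ lam k)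
    (hmono : ∀ k, 1 ≤ k → lam k ≤ lam (k + 1))
    (hgap : ∀ k, 1 ≤ k → Real.sqrt (lam (k + M)) - Real.sqrt (lam k) ≥ γ) :
    ∀ k, 1 ≤ k → ∀ ρ : ℝ, 0 < ρ →
      {m : ℕ | 1 ≤ m ∧ 0 < |lam m - lam k| ∧ |lam m - lam k| ≤ ρ}.Finite ∧
      (({m : ℕ | 1 ≤ m ∧ 0 < |lam m - lam k| ∧ |lam m - lam k| ≤ ρ}.ncard : ℝ)
        ≤ 2 * (Real.sqrt ρ / γ + 1) * M) := by
  intro k hk ρ hρ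
  set J : ℕ := Nat.floor (Real.sqrt ρ / γ) + 1 with hJdef
  -- monotonicity
  have mono : ∀ a b, 1 ≤ a → a ≤ b → lam a ≤ lam b := by
    intro a b ha hab
    induction b, hab using Nat.le_induction with
    | base => exact le_refl _
    | succ n hn ih => exact ih.trans (hmono n (ha.trans hn))
  -- iterated gap
  have gapIter : ∀ a, 1 ≤ a → ∀ j : ℕ,
      Real.sqrt (lam a) + j * γ ≤ Real.sqrt (lam (a + j * M)) := by
    intro a ha j
    induction j with
    | zero => simp
    | succ n ih =>
      have h1 := hgap (a + n * M) (by omega)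
      have he : a + (n + 1) * M = a + n * M + M := by ring
      rw [he]
      push_cast
      linarith
  -- sqrt difference bound
  have sqrtDiff : ∀ a b : ℝ, 0 ≤ b → b ≤ a → a - b ≤ ρ →
      Real.sqrt a - Real.sqrt b ≤ Real.sqrt ρ := by
    intro a b hb hba haρ
    have h1 : Real.sqrt a ≤ Real.sqrt (b + ρ) := Real.sqrt_le_sqrt (by linarith)
    have h2 : Real.sqrt (b + ρ) ≤ Real.sqrt b + Real.sqrt ρ := by
      have h3 : b + ρ ≤ (Real.sqrt b + Real.sqrt ρ) ^ 2 := by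
        nlinarith [Real.sq_sqrt hb, Real.sq_sqrt hρ.le, Real.sqrt_nonneg b,
          Real.sqrt_nonneg ρ, mul_nonneg (Real.sqrt_nonneg b) (Real.sqrt_nonneg ρ)]
      have := Real.sqrt_le_sqrt h3
      rwa [Real.sqrt_sq (by positivity)] at this
    linarith
  have hJγ : Real.sqrt ρ < J * γ := by
    have h := Nat.lt_floor_add_one (Real.sqrt ρ / γ)
    have : Real.sqrt ρ / γ < (J : ℝ) := by push_cast [hJdef]; linarith
    calc Real.sqrt ρ = (Real.sqrt ρ / γ) * γ := by field_simp
    _ < (J : ℝ) * γ := by exact mul_lt_mul_of_pos_right this hγ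
  -- subset of an interval
  have hsub : {m : ℕ | 1 ≤ m ∧ 0 < |lam m - lam k| ∧ |lam m - lam k| ≤ ρ}
      ⊆ ↑(Finset.Ico (k + 1 - J * M) (k + J * M)) := by
    intro m hm
    obtain ⟨hm1, hpos, hle⟩ := hm
    simp only [Finset.coe_Ico, Set.mem_Ico]
    constructor
    · -- lower bound: ¬ (m + J*M ≤ k)
      by_contra h
      push_neg at h
      have hmk : m + J * M ≤ k := by omega
      have h1 := gapIter m hm1 J
      have h2 : Real.sqrt (lam (m + J * M)) ≤ Real.sqrt (lam k) :=
        Real.sqrt_le_sqrt (mono _ _ (by omega) hmk)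
      have hml : lam m ≤ lam k := mono m k hm1 (by omega)
      have hd : lam k - lam m ≤ ρ := by
        rw [abs_sub_comm] at hle
        rw [abs_of_nonneg (by linarith)] at hle
        exact hle
      have := sqrtDiff (lam k) (lam m) (hnonneg m hm1) hml hd
      linarith
    · by_contra h
      push_neg at h
      have h1 := gapIter k hk J
      have h2 : Real.sqrt (lam (k + J * M)) ≤ Real.sqrt (lam m) :=
        Real.sqrt_le_sqrt (mono _ _ (by omega) h)
      have hml : lam k ≤ lam m := mono k m hk (by omega)
      have hd : lam m - lam k ≤ ρ := by
        rw [abs_of_nonneg (by linarith)] at hle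
        exact hle
      have := sqrtDiff (lam m) (lam k) (hnonneg k hk) hml hd
      linarith
  have hfin : {m : ℕ | 1 ≤ m ∧ 0 < |lam m - lam k| ∧ |lam m - lam k| ≤ ρ}.Finite :=
    Set.Finite.subset (Finset.finite_toSet _) hsub
  refine ⟨hfin, ?_⟩
  have hcard : {m : ℕ | 1 ≤ m ∧ 0 < |lam m - lam k| ∧ |lam m - lam k| ≤ ρ}.ncard
      ≤ (Finset.Ico (k + 1 - J * M) (k + J * M)).card := by
    rw [← Set.ncard_coe_finset]
    exact Set.ncard_le_ncard hsub (Finset.finite_toSet _)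
  rw [Nat.card_Ico] at hcard
  have hcard2 : {m : ℕ | 1 ≤ m ∧ 0 < |lam m - lam k| ∧ |lam m - lam k| ≤ ρ}.ncard
      ≤ 2 * (J * M) := by
    have : 1 ≤ J * M := Nat.one_le_iff_ne_zero.mpr (by positivity)
    omega
  calc ({m : ℕ | 1 ≤ m ∧ 0 < |lam m - lam k| ∧ |lam m - lam k| ≤ ρ}.ncard : ℝ)
      ≤ (2 * (J * M) : ℕ) := by exact_mod_cast hcard2
  _ ≤ 2 * (Real.sqrt ρ / γ + 1) * M := by
      push_cast [hJdef]
      have hfl : ((Nat.floor (Real.sqrt ρ / γ) : ℝ)) ≤ Real.sqrt ρ / γ :=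
        Nat.floor_le (by positivity)
      have hM1 : (1 : ℝ) ≤ (M : ℝ) := by exact_mod_cast hM
      nlinarith [hfl, hM1]
end

section
/- Let T > 0, p, q ≥ 0 with p + 2q > 0. Suppose {λ_k}_{k≥1} is an increasing sequence of positive reals satisfying C₁k² ≤ λ_k ≤ C₂k² for all k ≥ 2 (with C₁, C₂ > 0), and suppose there exist M ∈ ℕ* and γ > 0 such that λ_{k+M} − λ_k ≥ γ for all k. Then there exist constants A, B > 0 (depending on p, q, M, γ but not on T) such that Σ_{k=1}^∞ λ_k^{p+2q} e^{−λ_k T} ≤ A/T^{p+2q} + B/T^{p+2q+1} for all 0 < T ≤ 1. -/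
/-! A quadratic lower bound gives `λ_k ≥ c k` for some `c > 0`. Writing `s = p + 2q` and
`e^{-λT} = e^{-λT/2} e^{-λT/2}`, the first half absorbs the power:
`λ^s e^{-λT/2} ≤ (2s/T)^s e^{-s}`. The second half is at most `e^{-ckT/2}`, whose sum over
`k ≥ 1` is `1/(e^{cT/2} - 1) ≤ 2/(cT)`. So the series is `O(T^{-(s+1)})`. -/

open Real

theorem rpow_mul_exp_neg_le {s y : ℝ} (hs : 0 < s) (hy : 0 ≤ y) :
    y ^ s * exp (-y) ≤ s ^ s * exp (-s) := by
  rcases hy.eq_or_lt with rfl | hy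
  · rw [zero_rpow hs.ne', zero_mul]
    positivity
  rw [rpow_def_of_pos hy, rpow_def_of_pos hs, ← exp_add, ← exp_add, exp_le_exp]
  have hlog : log (y / s) ≤ y / s - 1 := log_le_sub_one_of_pos (by positivity)
  rw [log_div hy.ne' hs.ne', le_sub_iff_add_le, le_div_iff₀ hs] at hlog
  nlinarith

theorem rpow_mul_exp_neg_mul_le {s t y : ℝ} (hs : 0 < s) (ht : 0 < t) (hy : 0 ≤ y) :
    y ^ s * exp (-(t * y)) ≤ s ^ s * exp (-s) / t ^ s := by
  have key := rpow_mul_exp_neg_le hs (mul_nonneg ht.le hy)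
  rw [mul_rpow ht.le hy] at key
  rw [le_div_iff₀ (by positivity)]
  linarith

theorem hasSum_exp_neg_mul_of_one_le {x : ℝ} (hx : 0 < x) :
    HasSum (fun k : {n : ℕ // 1 ≤ n} => exp (-(x * k))) (exp x - 1)⁻¹ := by
  have hr : exp (-x) < 1 := exp_lt_one_iff.mpr (neg_lt_zero.mpr hx)
  refine hasSum_pnat_iff_hasSum_succ (f := fun n : ℕ => exp (-(x * n))) |>.mpr ?_
  have hsucc : ∀ n : ℕ, exp (-(x * ↑(n + 1))) = exp (-x) * exp (-x) ^ n := by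
    intro n
    rw [← exp_nat_mul, ← exp_add]
    push_cast
    ring_nf
  have hsum : exp (-x) * (1 - exp (-x))⁻¹ = (exp x - 1)⁻¹ := by
    have : 1 < exp x := one_lt_exp_iff.mpr hx
    rw [exp_neg]
    field_simp
  simp only [hsucc, ← hsum]
  exact (hasSum_geometric_of_lt_one (exp_pos _).le hr).mul_left _

theorem inv_exp_sub_one_le_inv {x : ℝ} (hx : 0 < x) : (exp x - 1)⁻¹ ≤ x⁻¹ :=
  inv_anti₀ hx (by linarith [add_one_le_exp x])

theorem exists_pos_mul_le_of_mul_sq_le {lam : ℕ → ℝ} {C : ℝ} (hC : 0 < C) (h1 : 0 < lam 1)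
    (hsq : ∀ k : ℕ, 2 ≤ k → C * (k : ℝ) ^ 2 ≤ lam k) :
    ∃ c > 0, ∀ k : ℕ, 1 ≤ k → c * k ≤ lam k := by
  refine ⟨min C (lam 1), lt_min hC h1, fun k hk => ?_⟩
  rcases hk.eq_or_lt with rfl | hk
  · simp
  have hk1 : (1 : ℝ) ≤ k := by exact_mod_cast hk.le
  calc min C (lam 1) * k ≤ C * k := by gcongr; exact min_le_left C (lam 1)
    _ ≤ C * k ^ 2 := by gcongr; nlinarith
    _ ≤ lam k := hsq k hk

theorem tsum_rpow_mul_exp_neg_mul_le {lam : ℕ → ℝ} {s c T : ℝ} (hs : 0 < s) (hc : 0 < c)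
    (hT : 0 < T) (hlam : ∀ k : ℕ, 1 ≤ k → c * k ≤ lam k) :
    ∑' k : {n : ℕ // 1 ≤ n}, lam k ^ s * exp (-lam k * T)
      ≤ 2 * 2 ^ s * s ^ s * exp (-s) / c / T ^ (s + 1) := by
  set x := c * T / 2
  have hx : 0 < x := by positivity
  set D := s ^ s * exp (-s) / (T / 2) ^ s
  have hgeom := hasSum_exp_neg_mul_of_one_le hx
  have hterm : ∀ k : {n : ℕ // 1 ≤ n},
      lam k ^ s * exp (-lam k * T) ≤ D * exp (-(x * k)) := by
    rintro ⟨k, hk⟩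
    have hlk : c * k ≤ lam k := hlam k hk
    have hlk0 : 0 ≤ lam k := le_trans (by positivity) hlk
    calc lam k ^ s * exp (-lam k * T)
        = lam k ^ s * exp (-(T / 2 * lam k)) * exp (-(T / 2 * lam k)) := by
          rw [mul_assoc, ← exp_add]; ring_nf
      _ ≤ D * exp (-(x * k)) := by
          refine mul_le_mul (rpow_mul_exp_neg_mul_le hs (by positivity) hlk0) ?_
            (by positivity) (by positivity)
          rw [exp_le_exp]
          simp only [x]
          nlinarith
  have hsummable : Summable (fun k : {n : ℕ // 1 ≤ n} => lam k ^ s * exp (-lam k * T)) :=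
    (hgeom.summable.mul_left D).of_nonneg_of_le
      (fun ⟨k, hk⟩ => by have := le_trans (by positivity) (hlam k hk); positivity) hterm
  calc ∑' k : {n : ℕ // 1 ≤ n}, lam k ^ s * exp (-lam k * T)
      ≤ ∑' k : {n : ℕ // 1 ≤ n}, D * exp (-(x * k)) :=
        hsummable.tsum_le_tsum hterm (hgeom.summable.mul_left D)
    _ = D * (exp x - 1)⁻¹ := (hgeom.mul_left D).tsum_eq
    _ ≤ D * x⁻¹ := mul_le_mul_of_nonneg_left (inv_exp_sub_one_le_inv hx) (by positivity)
    _ = 2 * 2 ^ s * s ^ s * exp (-s) / c / T ^ (s + 1) := by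
        simp only [D, x]
        rw [div_rpow hT.le zero_le_two, rpow_add_one hT.ne']
        field_simp

theorem stmt_4_general (p q : ℝ) (lam : ℕ → ℝ) (C₁ C₂ : ℝ)
    (hpq : 0 < p + 2 * q)
    (hC₁ : 0 < C₁)
    (hpos : ∀ k, 1 ≤ k → 0 < lam k)
    (hquad : ∀ k : ℕ, 2 ≤ k → C₁ * (k : ℝ) ^ 2 ≤ lam k ∧ lam k ≤ C₂ * (k : ℝ) ^ 2) :
    ∃ A B : ℝ, 0 < A ∧ 0 < B ∧ ∀ T : ℝ, 0 < T → T ≤ 1 →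
      ∑' k : {n : ℕ // 1 ≤ n}, (lam k) ^ (p + 2 * q) * Real.exp (-(lam k) * T)
        ≤ A / T ^ (p + 2 * q) + B / T ^ (p + 2 * q + 1) := by
  obtain ⟨c, hc, hlam⟩ := exists_pos_mul_le_of_mul_sq_le hC₁ (hpos 1 le_rfl)
    fun k hk => (hquad k hk).1
  set s := p + 2 * q
  refine ⟨1, 2 * 2 ^ s * s ^ s * exp (-s) / c, one_pos, by positivity, fun T hT _ => ?_⟩
  have hA : 0 ≤ 1 / T ^ s := by positivity
  linarith [tsum_rpow_mul_exp_neg_mul_le hpq hc hT hlam]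

theorem stmt_4 (p q : ℝ) (lam : ℕ → ℝ) (C₁ C₂ γ : ℝ) (M : ℕ)
    (hp : 0 ≤ p) (hq : 0 ≤ q) (hpq : 0 < p + 2 * q)
    (hC₁ : 0 < C₁) (hC₂ : 0 < C₂) (hγ : 0 < γ) (hM : 1 ≤ M)
    (hpos : ∀ k, 1 ≤ k → 0 < lam k)
    (hmono : ∀ k, 1 ≤ k → lam k < lam (k + 1))
    (hquad : ∀ k : ℕ, 2 ≤ k → C₁ * (k : ℝ) ^ 2 ≤ lam k ∧ lam k ≤ C₂ * (k : ℝ) ^ 2)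
    (hgap : ∀ k, 1 ≤ k → lam (k + M) - lam k ≥ γ) :
    ∃ A B : ℝ, 0 < A ∧ 0 < B ∧ ∀ T : ℝ, 0 < T → T ≤ 1 →
      ∑' k : {n : ℕ // 1 ≤ n}, (lam k) ^ (p + 2 * q) * Real.exp (-(lam k) * T)
        ≤ A / T ^ (p + 2 * q) + B / T ^ (p + 2 * q + 1) :=
  stmt_4_general p q lam C₁ C₂ hpq hC₁ hpos hquad
end

section
/- Suppose (a¹,a²,a³) ∈ ℝ³ and λ > 0 satisfy: a^l cos(√λ L_l) takes a common value for l = 1,2,3, Σ_{l=1}^3 a^l sin(√λ L_l) = 0, cos(√λ L_l) ≠ 0 for all l, and Σ_{l=1}^3 (a^l)² (L_l/2 + cos(L_l√λ)sin(L_l√λ)/(2√λ)) = 1. Then Σ_{l=1}^3 (a^l)² L_l / 2 = 1, and consequently |a^k|² (L_k + Σ_{l≠k} L_l cos²(√λ L_k)/cos²(√λ L_l)) = 2 for each k. -/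
/-!
Write `c_l = cos(√λ L_l)` and `s_l = sin(√λ L_l)`. Since `a_l c_l` is a common value `v`,
`Σ (a_l)² c_l s_l = v Σ a_l s_l = 0` by the Kirchhoff condition, so the oscillating part of the
normalization integral drops out and `Σ (a_l)² L_l = 2`. The second claim is the same sum
rewritten through `a_l = a_k c_k / c_l`.
-/

open Finset

variable {ι : Type*} [Fintype ι]

theorem sum_sq_mul_mul_eq_zero_of_mul_eq_const {a c s : ι → ℝ} {v : ℝ}
    (hv : ∀ l, a l * c l = v) (hs : ∑ l, a l * s l = 0) :
    ∑ l, a l ^ 2 * (c l * s l) = 0 := by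
  calc ∑ l, a l ^ 2 * (c l * s l) = ∑ l, (a l * c l) * (a l * s l) := by
        refine sum_congr rfl fun l _ => ?_
        ring
    _ = 0 := by simp only [hv, ← mul_sum, hs, mul_zero]

theorem sum_mul_add_div_eq_of_sum_mul_eq_zero {w x y : ι → ℝ} (r : ℝ)
    (hy : ∑ l, w l * y l = 0) :
    ∑ l, w l * (x l + y l / r) = ∑ l, w l * x l := by
  simp only [mul_add, sum_add_distrib, ← mul_div_assoc, ← sum_div, hy, zero_div, add_zero]

theorem sq_mul_add_sum_ne_div_eq_sum [DecidableEq ι] {a c : ι → ℝ} {v : ℝ} (L : ι → ℝ)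
    (hc : ∀ l, c l ≠ 0) (hv : ∀ l, a l * c l = v) (k : ι) :
    a k ^ 2 * (L k + ∑ l ∈ univ.filter (· ≠ k), L l * c k ^ 2 / c l ^ 2)
      = ∑ l, a l ^ 2 * L l := by
  have hterm : ∀ l, a k ^ 2 * (L l * c k ^ 2 / c l ^ 2) = a l ^ 2 * L l := by
    intro l
    have hal : a l = v / c l := by rw [← hv l, mul_div_cancel_right₀ _ (hc l)]
    have hak : a k = v / c k := by rw [← hv k, mul_div_cancel_right₀ _ (hc k)]
    rw [hal, hak]
    field_simp [hc k, hc l]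
  rw [mul_add, mul_sum, sum_congr rfl fun l _ => hterm l, filter_ne',
    sum_erase_eq_sub (mem_univ k), add_sub_cancel]

theorem stmt_10_general (L a : Fin 3 → ℝ) (lam : ℝ)
    (hcont : ∀ l m : Fin 3,
      a l * Real.cos (Real.sqrt lam * L l) = a m * Real.cos (Real.sqrt lam * L m))
    (hkirch : ∑ l : Fin 3, a l * Real.sin (Real.sqrt lam * L l) = 0)
    (hcos : ∀ l, Real.cos (Real.sqrt lam * L l) ≠ 0)
    (hnorm : ∑ l : Fin 3, (a l) ^ 2 *
      (L l / 2 + Real.cos (L l * Real.sqrt lam) * Real.sin (L l * Real.sqrt lam)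
        / (2 * Real.sqrt lam)) = 1) :
    (∑ l : Fin 3, (a l) ^ 2 * L l / 2 = 1) ∧
    ∀ k : Fin 3, (a k) ^ 2 * (L k + ∑ l ∈ Finset.univ.filter (· ≠ k),
        L l * Real.cos (Real.sqrt lam * L k) ^ 2 / Real.cos (Real.sqrt lam * L l) ^ 2)
      = 2 := by
  have hv : ∀ l, a l * Real.cos (Real.sqrt lam * L l) = a 0 * Real.cos (Real.sqrt lam * L 0) :=
    fun l => hcont l 0
  have hcross := sum_sq_mul_mul_eq_zero_of_mul_eq_const hv hkirch
  simp only [mul_comm (L _) (Real.sqrt lam)] at hnorm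
  rw [sum_mul_add_div_eq_of_sum_mul_eq_zero _ hcross] at hnorm
  have hhalf : ∑ l, a l ^ 2 * L l / 2 = 1 := by simpa only [mul_div_assoc] using hnorm
  have hsum : ∑ l, a l ^ 2 * L l = 2 := by
    rw [← sum_div] at hhalf
    linarith
  refine ⟨hhalf, fun k => ?_⟩
  rw [sq_mul_add_sum_ne_div_eq_sum L hcos hv k, hsum]

theorem stmt_10 (L a : Fin 3 → ℝ) (lam : ℝ) (hlam : 0 < lam)
    (hL : ∀ l, 0 < L l)
    (hcont : ∀ l m : Fin 3,
      a l * Real.cos (Real.sqrt lam * L l) = a m * Real.cos (Real.sqrt lam * L m))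
    (hkirch : ∑ l : Fin 3, a l * Real.sin (Real.sqrt lam * L l) = 0)
    (hcos : ∀ l, Real.cos (Real.sqrt lam * L l) ≠ 0)
    (hnorm : ∑ l : Fin 3, (a l) ^ 2 *
      (L l / 2 + Real.cos (L l * Real.sqrt lam) * Real.sin (L l * Real.sqrt lam)
        / (2 * Real.sqrt lam)) = 1) :
    (∑ l : Fin 3, (a l) ^ 2 * L l / 2 = 1) ∧
    ∀ k : Fin 3, (a k) ^ 2 * (L k + ∑ l ∈ Finset.univ.filter (· ≠ k),
        L l * Real.cos (Real.sqrt lam * L k) ^ 2 / Real.cos (Real.sqrt lam * L l) ^ 2)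
      = 2 :=
  stmt_10_general L a lam hcont hkirch hcos hnorm
end
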